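/- Let θ ≥ 2 be an integer and φ : Δ_θ → ℝ continuous. For each n ≥ 1 suppose given real numbers φ_n^{(λ)}(μ) for each pair λ, μ ⊢_θ n, together with a sequence δ_n → 0 such that |φ_n^{(λ)}(μ) − φ(μ/n)| ≤ δ_n for all n and all λ, μ ⊢_θ n (where μ/n = (μ_1/n,…,μ_θ/n) ∈ Δ_θ). If λ^{(n)} ⊢_θ n is a sequence with λ^{(n)}/n → x ∈ Δ_θ as n → ∞, then (1/n)·log( ∑_{μ ⊢_θ n, μ ⊵ λ^{(n)}} exp(n·φ_n^{(λ^{(n)})}(μ)) ) → max_{y ∈ Δ_θ(x)} φ(y) as n → ∞. -/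

import Mathlib

open Filter Topology

/-- The set `Δ_θ` of decreasing probability vectors in `ℝ^θ`. -/
def simplexOrd (θ : ℕ) : Set (Fin θ → ℝ) :=
  {x | (∀ i j : Fin θ, i ≤ j → x j ≤ x i) ∧ (∀ i, 0 ≤ x i) ∧ ∑ i, x i = 1}

/-- `y ⊵ x`: domination of partial sums (real vectors). -/
def domR (θ : ℕ) (y x : Fin θ → ℝ) : Prop :=
  ∀ j : Fin θ, (∑ i ∈ Finset.univ.filter (fun i : Fin θ => i ≤ j), x i)
    ≤ ∑ i ∈ Finset.univ.filter (fun i : Fin θ => i ≤ j), y i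

/-- `Δ_θ(x) = {y ∈ Δ_θ : y ⊵ x}`. -/
def domSet (θ : ℕ) (x : Fin θ → ℝ) : Set (Fin θ → ℝ) :=
  {y ∈ simplexOrd θ | domR θ y x}

/-- The finset of partitions of `n` into at most `θ` parts. -/
def partitionsTh (θ n : ℕ) : Finset (Fin θ → ℕ) :=
  (Fintype.piFinset fun _ : Fin θ => Finset.range (n + 1)).filter
    (fun lam => (∀ i j : Fin θ, i ≤ j → lam j ≤ lam i) ∧ ∑ i, lam i = n)

/-- `μ ⊵ λ`: domination of partial sums (partitions). -/
def domN (θ : ℕ) (μ lam : Fin θ → ℕ) : Prop :=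
  ∀ j : Fin θ, (∑ i ∈ Finset.univ.filter (fun i : Fin θ => i ≤ j), lam i)
    ≤ ∑ i ∈ Finset.univ.filter (fun i : Fin θ => i ≤ j), μ i

instance (θ : ℕ) (μ lam : Fin θ → ℕ) : Decidable (domN θ μ lam) := by
  unfold domN; infer_instance

/-!
A partition of `n` has at most `θ` parts, each at most `n`, so there are at most `(n + 1) ^ θ`
of them: `(1/n) log` of the sum is, up to `o(1)`, the largest exponent `Φ_n(λ⁽ⁿ⁾, μ)`, which is
within `δ_n` of `φ(μ/n)`. It remains to compare `φ(μ/n)` for `μ ⊵ λ⁽ⁿ⁾` with `M = max_{Δ_θ(x)} φ`.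

Upper bound: by compactness of `Δ_θ`, `φ ≤ M + ε` at every `y ∈ Δ_θ` whose prefix sums are
at least those of `x` minus some `η > 0`, and `μ/n` is such a vector for large `n` when
`μ ⊵ λ⁽ⁿ⁾`.

Lower bound: let `y` be a maximiser. Rounding `n y'` down and giving the deficit (less than `θ`)
to the first part yields a partition within `θ` of `n y'` whose prefix sums dominate those of
`n y'`. With `Xⱼ`, `Yⱼ` the prefix sums of `x`, `y`, the tilted vector `y' = (1 - t) y + t e₁`
has prefix sums `(1 - t) Yⱼ + t ≥ Xⱼ + t (1 - Xⱼ)`, and this slack absorbs the error of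
`λ⁽ⁿ⁾/n → x`; where it vanishes, `Xⱼ = Yⱼ = 1` and domination is automatic.
-/

open Finset

lemma Real.tendsto_log_add_one_div_natCast :
    Tendsto (fun n : ℕ => Real.log (n + 1) / n) atTop (𝓝 0) := by
  have h := (Real.tendsto_pow_log_div_mul_add_atTop 1 (-1) 1 one_ne_zero).comp
    (tendsto_atTop_add_const_right _ 1 tendsto_natCast_atTop_atTop)
  simpa [Function.comp_def] using h

lemma le_one_div_mul_log_sum_exp {α : Type*} {s : Finset α} {f : α → ℝ} {a : α} (ha : a ∈ s)
    {n : ℝ} (hn : 0 < n) : f a ≤ 1 / n * Real.log (∑ b ∈ s, Real.exp (n * f b)) := by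
  have h : n * f a ≤ Real.log (∑ b ∈ s, Real.exp (n * f b)) :=
    (Real.le_log_iff_exp_le (sum_pos (fun _ _ => Real.exp_pos _) ⟨a, ha⟩)).2
      (single_le_sum (f := fun b => Real.exp (n * f b)) (fun _ _ => (Real.exp_pos _).le) ha)
  rw [one_div_mul_eq_div, le_div_iff₀ hn]
  linarith

lemma one_div_mul_log_sum_exp_le {α : Type*} {s : Finset α} {f : α → ℝ} {c : ℝ}
    (hs : s.Nonempty) (hf : ∀ a ∈ s, f a ≤ c) {n : ℝ} (hn : 0 < n) :
    1 / n * Real.log (∑ b ∈ s, Real.exp (n * f b)) ≤ Real.log #s / n + c := by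
  have hsum : ∑ b ∈ s, Real.exp (n * f b) ≤ #s * Real.exp (n * c) := by
    simpa using sum_le_card_nsmul s _ _ fun a ha =>
      Real.exp_le_exp.2 (mul_le_mul_of_nonneg_left (hf a ha) hn.le)
  have hlog := Real.log_le_log (sum_pos (fun _ _ => Real.exp_pos _) hs) hsum
  rw [Real.log_mul (by simpa using hs.ne_empty) (Real.exp_ne_zero _), Real.log_exp] at hlog
  rw [one_div_mul_eq_div, div_le_iff₀ hn, add_mul, div_mul_cancel₀ _ hn.ne']
  linarith

theorem tendsto_one_div_mul_log_sum_exp {α : Type*} {s : ℕ → Finset α} {F : ℕ → α → ℝ}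
    {M : ℝ} {d : ℕ} (hcard : ∀ n, #(s n) ≤ (n + 1) ^ d)
    (hupper : ∀ ε > 0, ∀ᶠ n in atTop, ∀ a ∈ s n, F n a ≤ M + ε)
    (hlower : ∀ ε > 0, ∀ᶠ n in atTop, ∃ a ∈ s n, M - ε ≤ F n a) :
    Tendsto (fun n : ℕ => 1 / (n : ℝ) * Real.log (∑ a ∈ s n, Real.exp (n * F n a)))
      atTop (𝓝 M) := by
  refine tendsto_order.2 ⟨fun b hb => ?_, fun b hb => ?_⟩
  · filter_upwards [hlower _ (half_pos (sub_pos.2 hb)), eventually_gt_atTop 0]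
      with n ⟨a, ha, hFa⟩ hn
    have := le_one_div_mul_log_sum_exp (f := F n) ha (Nat.cast_pos.2 hn)
    linarith
  · have hlog : ∀ᶠ n : ℕ in atTop, d * (Real.log (n + 1) / n) < (b - M) / 2 := by
      have h := Real.tendsto_log_add_one_div_natCast.const_mul (d : ℝ)
      rw [mul_zero] at h
      exact h.eventually_lt_const (half_pos (sub_pos.2 hb))
    filter_upwards [hupper _ (half_pos (sub_pos.2 hb)), hlower 1 one_pos, hlog,
      eventually_gt_atTop 0] with n hup ⟨a, ha, _⟩ hlogn hn
    have hcard_log : Real.log #(s n) ≤ d * Real.log (n + 1) := by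
      rw [← Real.log_pow]
      exact Real.log_le_log (by simpa using ⟨a, ha⟩) (by exact_mod_cast hcard n)
    have hn' : (0 : ℝ) < n := Nat.cast_pos.2 hn
    calc 1 / (n : ℝ) * Real.log (∑ a ∈ s n, Real.exp (n * F n a))
        ≤ Real.log #(s n) / n + (M + (b - M) / 2) := one_div_mul_log_sum_exp_le ⟨a, ha⟩ hup hn'
      _ ≤ d * (Real.log (n + 1) / n) + (M + (b - M) / 2) := by
        rw [← mul_div_assoc]; gcongr
      _ < b := by linarith

lemma antitone_single_of_isBot {ι M : Type*} [PartialOrder ι] [DecidableEq ι] [Zero M] [Preorder M]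
    {i₀ : ι} (hi₀ : IsBot i₀) {t : M} (ht : 0 ≤ t) : Antitone (Pi.single i₀ t : ι → M) := by
  intro i j hij
  by_cases hj : j = i₀
  · subst hj
    rw [le_antisymm hij (hi₀ i)]
  · simp only [Pi.single_apply, hj, if_false]
    split_ifs <;> simp [ht]

lemma dist_natCast_div_le {ι : Type*} [Fintype ι] {μ : ι → ℕ} {y : ι → ℝ} {n : ℕ} (hn : 0 < n)
    {c : ℝ} (hc : 0 ≤ c) (h : ∀ i, |(μ i : ℝ) - n * y i| ≤ c) :
    dist (fun i => (μ i : ℝ) / n) y ≤ c / n := by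
  have hn' : (0 : ℝ) < n := Nat.cast_pos.2 hn
  refine (dist_pi_le_iff (by positivity)).2 fun i => ?_
  rw [Real.dist_eq, div_sub' hn'.ne', abs_div, abs_of_pos hn']
  exact div_le_div_of_nonneg_right (h i) hn'.le

lemma eventually_le_one_sub_mul_add_of_tendsto {ι : Type*} {l : Filter ι} {b : ι → ℝ}
    {a c t : ℝ} (hb : Tendsto b l (𝓝 a)) (hb₁ : ∀ᶠ n in l, b n ≤ 1) (hac : a ≤ c) (hc : c ≤ 1)
    (ht : 0 < t) : ∀ᶠ n in l, b n ≤ (1 - t) * c + t := by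
  rcases hc.lt_or_eq with hc | rfl
  · exact (hb.eventually_lt_const (by nlinarith)).mono fun _ => le_of_lt
  · simpa using hb₁

section Simplex

variable {θ : ℕ}

def prefixSum {M : Type*} [AddCommMonoid M] (v : Fin θ → M) (j : Fin θ) : M :=
  ∑ i ∈ univ.filter (· ≤ j), v i

lemma continuous_prefixSum (j : Fin θ) : Continuous fun v : Fin θ → ℝ => prefixSum v j :=
  continuous_finsetSum _ fun i _ => continuous_apply i

lemma prefixSum_natCast_div (μ : Fin θ → ℕ) (n : ℝ) (j : Fin θ) :
    prefixSum (fun i => (μ i : ℝ) / n) j = prefixSum μ j / n := by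
  simp [prefixSum, sum_div]

lemma domR_natCast_div {μ lam : Fin θ → ℕ} (h : domN θ μ lam) (n : ℕ) :
    domR θ (fun i => (μ i : ℝ) / n) (fun i => (lam i : ℝ) / n) := fun j => by
  change prefixSum _ j ≤ prefixSum _ j
  rw [prefixSum_natCast_div, prefixSum_natCast_div]
  gcongr
  exact_mod_cast h j

lemma pos_of_mem_simplexOrd {y : Fin θ → ℝ} (hy : y ∈ simplexOrd θ) : 0 < θ := by
  rcases Nat.eq_zero_or_pos θ with rfl | h
  · simp [simplexOrd] at hy
  · exact h

lemma le_one_of_mem_simplexOrd {y : Fin θ → ℝ} (hy : y ∈ simplexOrd θ) (i : Fin θ) : y i ≤ 1 :=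
  hy.2.2 ▸ single_le_sum (fun j _ => hy.2.1 j) (mem_univ i)

lemma prefixSum_le_one {y : Fin θ → ℝ} (hy : y ∈ simplexOrd θ) (j : Fin θ) :
    prefixSum y j ≤ 1 :=
  hy.2.2 ▸ sum_le_sum_of_subset_of_nonneg (filter_subset _ _) fun i _ _ => hy.2.1 i

lemma natCast_div_mem_simplexOrd {n : ℕ} (hn : n ≠ 0) {μ : Fin θ → ℕ}
    (hμ : μ ∈ partitionsTh θ n) : (fun i => (μ i : ℝ) / n) ∈ simplexOrd θ := by
  obtain ⟨hdec, hsum⟩ := (mem_filter.1 hμ).2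
  refine ⟨fun i j hij => ?_, fun i => by positivity, ?_⟩
  · change (μ j : ℝ) / n ≤ μ i / n
    gcongr
    exact hdec i j hij
  · rw [← sum_div, ← Nat.cast_sum, hsum, div_self (Nat.cast_ne_zero.2 hn)]

lemma isClosed_simplexOrd : IsClosed (simplexOrd θ) := by
  simp only [simplexOrd, Set.ofPred_and, Set.ofPred_forall]
  exact (isClosed_iInter fun i => isClosed_iInter fun j => isClosed_iInter fun _ =>
      isClosed_le (continuous_apply j) (continuous_apply i)).inter
    ((isClosed_iInter fun i => isClosed_le continuous_const (continuous_apply i)).inter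
      (isClosed_eq (continuous_finsetSum _ fun i _ => continuous_apply i) continuous_const))

lemma isCompact_simplexOrd : IsCompact (simplexOrd θ) :=
  (isCompact_Icc (a := 0) (b := 1)).of_isClosed_subset isClosed_simplexOrd
    fun _ hy => ⟨hy.2.1, le_one_of_mem_simplexOrd hy⟩

lemma isClosed_setOf_le_prefixSum (a : Fin θ → ℝ) :
    IsClosed {y : Fin θ → ℝ | ∀ j, a j ≤ prefixSum y j} := by
  simp only [Set.ofPred_forall]
  exact isClosed_iInter fun j => isClosed_le continuous_const (continuous_prefixSum j)

lemma isCompact_domSet (x : Fin θ → ℝ) : IsCompact (domSet θ x) :=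
  isCompact_simplexOrd.of_isClosed_subset
    (isClosed_simplexOrd.inter (isClosed_setOf_le_prefixSum fun j => prefixSum x j))
    fun _ hy => hy.1

lemma exists_isGreatest_image_domSet {φ : (Fin θ → ℝ) → ℝ} (hφ : ContinuousOn φ (simplexOrd θ))
    {x : Fin θ → ℝ} (hx : x ∈ simplexOrd θ) : ∃ M, IsGreatest (φ '' domSet θ x) M :=
  ((isCompact_domSet x).image_of_continuousOn (hφ.mono fun _ hy => hy.1)).exists_isGreatest
    ⟨φ x, x, ⟨hx, fun _ => le_rfl⟩, rfl⟩

end Simplex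

section Tilt

variable {θ : ℕ} {y : Fin θ → ℝ} {i₀ : Fin θ} {t : ℝ}

lemma smul_add_single_mem_simplexOrd (hy : y ∈ simplexOrd θ) (hi₀ : IsBot i₀) (ht₀ : 0 ≤ t)
    (ht₁ : t ≤ 1) : (1 - t) • y + Pi.single i₀ t ∈ simplexOrd θ := by
  obtain ⟨hdec, hnn, hsum⟩ := hy
  refine ⟨fun i j hij => add_le_add ?_ (antitone_single_of_isBot hi₀ ht₀ hij),
    fun i => add_nonneg ?_ (Pi.single_nonneg.2 ht₀ i : (0 : Fin θ → ℝ) i ≤ _), ?_⟩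
  · exact mul_le_mul_of_nonneg_left (hdec i j hij) (sub_nonneg.2 ht₁)
  · exact mul_nonneg (sub_nonneg.2 ht₁) (hnn i)
  · simp [sum_add_distrib, ← mul_sum, hsum]

lemma prefixSum_smul_add_single (y : Fin θ → ℝ) (hi₀ : IsBot i₀) (t : ℝ) (j : Fin θ) :
    prefixSum ((1 - t) • y + Pi.single i₀ t) j = (1 - t) * prefixSum y j + t := by
  simp [prefixSum, sum_add_distrib, ← mul_sum, sum_pi_single', hi₀ j]

lemma dist_smul_add_single_le (hy : y ∈ simplexOrd θ) (ht : 0 ≤ t) :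
    dist ((1 - t) • y + Pi.single i₀ t) y ≤ t := by
  refine (dist_pi_le_iff ht).2 fun i => ?_
  have h₀ := hy.2.1 i
  have h₁ := le_one_of_mem_simplexOrd hy i
  rw [Real.dist_eq, abs_le]
  rcases eq_or_ne i i₀ with rfl | hi
  · simp only [Pi.add_apply, Pi.smul_apply, smul_eq_mul, Pi.single_eq_same]
    constructor <;> nlinarith
  · simp only [Pi.add_apply, Pi.smul_apply, smul_eq_mul, Pi.single_eq_of_ne hi]
    constructor <;> nlinarith

end Tilt

section Rounding

variable {θ : ℕ}

lemma mem_partitionsTh {n : ℕ} {μ : Fin θ → ℕ} (hμ : Antitone μ) (hsum : ∑ i, μ i = n) :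
    μ ∈ partitionsTh θ n := by
  refine mem_filter.2 ⟨Fintype.mem_piFinset.2 fun i => mem_range.2 ?_, fun i j h => hμ h, hsum⟩
  have := single_le_sum (fun j _ => Nat.zero_le (μ j)) (mem_univ i)
  omega

lemma card_partitionsTh_le (θ n : ℕ) : #(partitionsTh θ n) ≤ (n + 1) ^ θ :=
  (card_filter_le _ _).trans (by simp)

lemma exists_partition_floor {y : Fin θ → ℝ} (hy : y ∈ simplexOrd θ) (n : ℕ) :
    ∃ μ ∈ partitionsTh θ n, (∀ j, n * prefixSum y j ≤ prefixSum μ j) ∧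
      ∀ i, |(μ i : ℝ) - n * y i| ≤ θ := by
  have hθ := pos_of_mem_simplexOrd hy
  obtain ⟨hdec, hnn, hsum⟩ := hy
  let i₀ : Fin θ := ⟨0, hθ⟩
  have hi₀ : IsBot i₀ := fun i => Nat.zero_le i
  let ν : Fin θ → ℕ := fun i => ⌊n * y i⌋₊
  have hν : ∀ i, (ν i : ℝ) ≤ n * y i := fun i => Nat.floor_le (by have := hnn i; positivity)
  have hν' : ∀ i, n * y i - ν i < 1 := fun i => by linarith [Nat.sub_one_lt_floor (n * y i)]
  have hνn : ∑ i, (ν i : ℝ) ≤ n := by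
    simpa [← mul_sum, hsum] using sum_le_sum fun i (_ : i ∈ univ) => hν i
  have hνn' : ∑ i, ν i ≤ n := by exact_mod_cast hνn
  set r := n - ∑ i, ν i
  have hr : (r : ℝ) = ∑ i, (n * y i - ν i) := by
    rw [sum_sub_distrib, ← mul_sum, hsum, mul_one, Nat.cast_sub hνn', Nat.cast_sum]
  have hrθ : (r : ℝ) ≤ θ := by
    simpa [hr] using sum_le_sum fun i (_ : i ∈ univ) => (hν' i).le
  refine ⟨ν + Pi.single i₀ r, mem_partitionsTh ?_ ?_, fun j => ?_, fun i => ?_⟩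
  · refine Antitone.add (fun i j hij => Nat.floor_le_floor ?_)
      (antitone_single_of_isBot hi₀ r.zero_le)
    exact mul_le_mul_of_nonneg_left (hdec i j hij) n.cast_nonneg
  · simp only [Pi.add_apply, sum_add_distrib, sum_pi_single', mem_univ, if_true, r]
    omega
  · have hμj : ((prefixSum (ν + Pi.single i₀ r) j : ℕ) : ℝ) =
        ∑ i ∈ univ.filter (· ≤ j), (ν i : ℝ) + r := by
      simp [prefixSum, sum_add_distrib, sum_pi_single', hi₀ j]
    have htail : ∑ i ∈ univ.filter (fun i => ¬ i ≤ j), (ν i : ℝ) ≤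
        ∑ i ∈ univ.filter (fun i => ¬ i ≤ j), n * y i := sum_le_sum fun i _ => hν i
    have hsplit := sum_filter_add_sum_filter_not univ (· ≤ j) fun i => n * y i - ν i
    rw [hμj, hr, ← hsplit, sum_sub_distrib, sum_sub_distrib, prefixSum, mul_sum]
    linarith
  · have hsingle : 0 ≤ ((Pi.single i₀ r : Fin θ → ℕ) i : ℝ) ∧
        ((Pi.single i₀ r : Fin θ → ℕ) i : ℝ) ≤ r := by
      rcases eq_or_ne i i₀ with rfl | hi
      · simp
      · simp [hi]
    have hθ : (1 : ℝ) ≤ θ := by exact_mod_cast hθ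
    simp only [Pi.add_apply, Nat.cast_add]
    rw [abs_le]
    constructor <;> linarith [hν i, hν' i]

end Rounding

section Bounds

variable {θ : ℕ} {φ : (Fin θ → ℝ) → ℝ} {x : Fin θ → ℝ} {M : ℝ}

lemma exists_pos_forall_le_add_of_sub_le_prefixSum (hφ : ContinuousOn φ (simplexOrd θ))
    (hM : IsGreatest (φ '' domSet θ x) M) {ε : ℝ} (hε : 0 < ε) :
    ∃ η > 0, ∀ y ∈ simplexOrd θ, (∀ j, prefixSum x j - η ≤ prefixSum y j) → φ y ≤ M + ε := by
  let C := simplexOrd θ ∩ φ ⁻¹' Set.Ici (M + ε)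
  have hC : IsCompact C := isCompact_simplexOrd.of_isClosed_subset
    (hφ.preimage_isClosed_of_isClosed isClosed_simplexOrd isClosed_Ici) Set.inter_subset_left
  let t : Set.Ioi (0 : ℝ) → Set (Fin θ → ℝ) := fun η => {y | ∀ j, prefixSum x j - η ≤ prefixSum y j}
  have hCt : C ∩ ⋂ η, t η = ∅ := by
    refine Set.eq_empty_of_forall_notMem fun y ⟨⟨hy, hφy⟩, hyt⟩ => ?_
    have hyx : y ∈ domSet θ x := ⟨hy, fun j => le_of_forall_pos_le_add fun η hη =>
      sub_le_iff_le_add.1 (Set.mem_iInter.1 hyt ⟨η, hη⟩ j)⟩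
    exact (lt_add_of_pos_right M hε).not_ge ((hφy : M + ε ≤ φ y).trans (hM.2 ⟨y, hyx, rfl⟩))
  have ht : Monotone t := fun η η' hη y hy j =>
    (sub_le_sub_left (show (η : ℝ) ≤ η' from hη) _).trans (hy j)
  obtain ⟨⟨η, hη⟩, hCη⟩ := hC.elim_directed_family_closed t
    (fun η => isClosed_setOf_le_prefixSum _) hCt ht.directed_ge
  refine ⟨η, hη, fun y hy hyx => not_lt.1 fun hφy => ?_⟩
  exact hCη.subset ⟨⟨hy, Set.mem_Ici.2 hφy.le⟩, hyx⟩

lemma eventually_forall_dominating_le {lam : ℕ → Fin θ → ℕ}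
    (hφ : ContinuousOn φ (simplexOrd θ)) (hM : IsGreatest (φ '' domSet θ x) M)
    (hconv : Tendsto (fun n : ℕ => fun i => (lam n i : ℝ) / n) atTop (𝓝 x))
    {ε : ℝ} (hε : 0 < ε) :
    ∀ᶠ n in atTop, ∀ μ ∈ (partitionsTh θ n).filter (fun μ => domN θ μ (lam n)),
      φ (fun i => (μ i : ℝ) / n) ≤ M + ε := by
  obtain ⟨η, hη, hφη⟩ := exists_pos_forall_le_add_of_sub_le_prefixSum hφ hM hε
  have hlam : ∀ᶠ n in atTop, ∀ j,
      prefixSum x j - η ≤ prefixSum (fun i => (lam n i : ℝ) / n) j :=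
    eventually_all.2 fun j => (((continuous_prefixSum j).tendsto x).comp hconv).eventually
      (eventually_ge_nhds (sub_lt_self _ hη))
  filter_upwards [hlam, eventually_ne_atTop 0] with n hn hn0 μ hμ
  obtain ⟨hμp, hμd⟩ := mem_filter.1 hμ
  exact hφη _ (natCast_div_mem_simplexOrd hn0 hμp) fun j =>
    (hn j).trans (domR_natCast_div hμd n j)

lemma eventually_exists_dominating_near {lam : ℕ → Fin θ → ℕ}
    (hlam : ∀ n, 1 ≤ n → lam n ∈ partitionsTh θ n)
    (hconv : Tendsto (fun n : ℕ => fun i => (lam n i : ℝ) / n) atTop (𝓝 x))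
    {y : Fin θ → ℝ} (hy : y ∈ domSet θ x) {ρ : ℝ} (hρ : 0 < ρ) :
    ∀ᶠ n in atTop, ∃ μ ∈ (partitionsTh θ n).filter (fun μ => domN θ μ (lam n)),
      dist (fun i => (μ i : ℝ) / n) y < ρ := by
  obtain ⟨hyΔ, hyx⟩ := hy
  let i₀ : Fin θ := ⟨0, pos_of_mem_simplexOrd hyΔ⟩
  have hi₀ : IsBot i₀ := fun i => Nat.zero_le i
  set t := min (ρ / 2) 1
  have ht : 0 < t := lt_min (half_pos hρ) one_pos
  set y' := (1 - t) • y + Pi.single i₀ t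
  have hdom : ∀ᶠ n in atTop, ∀ j, prefixSum (fun i => (lam n i : ℝ) / n) j ≤ prefixSum y' j := by
    refine eventually_all.2 fun j => ?_
    rw [prefixSum_smul_add_single y hi₀]
    refine eventually_le_one_sub_mul_add_of_tendsto
      (((continuous_prefixSum j).tendsto x).comp hconv) ?_ (hyx j) (prefixSum_le_one hyΔ j) ht
    filter_upwards [eventually_ge_atTop 1] with n hn
    exact prefixSum_le_one (natCast_div_mem_simplexOrd (by omega) (hlam n hn)) j
  have hθn : ∀ᶠ n : ℕ in atTop, (θ : ℝ) / n < ρ / 2 :=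
    (tendsto_const_div_atTop_nhds_zero_nat _).eventually_lt_const (half_pos hρ)
  filter_upwards [hdom, hθn, eventually_gt_atTop 0] with n hdomn hθn hn
  obtain ⟨μ, hμ, hμy', hμnear⟩ :=
    exists_partition_floor (smul_add_single_mem_simplexOrd hyΔ hi₀ ht.le (min_le_right _ _)) n
  refine ⟨μ, mem_filter.2 ⟨hμ, fun j => ?_⟩, ?_⟩
  · have h := hdomn j
    rw [prefixSum_natCast_div, div_le_iff₀ (Nat.cast_pos.2 hn)] at h
    have h' : ((prefixSum (lam n) j : ℕ) : ℝ) ≤ prefixSum μ j :=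
      h.trans ((mul_comm _ _).trans_le (hμy' j))
    exact_mod_cast h'
  · calc dist (fun i => (μ i : ℝ) / n) y ≤ dist (fun i => (μ i : ℝ) / n) y' + dist y' y :=
          dist_triangle _ _ _
      _ ≤ θ / n + t := add_le_add (dist_natCast_div_le hn θ.cast_nonneg hμnear)
          (dist_smul_add_single_le hyΔ ht.le)
      _ < ρ / 2 + ρ / 2 := add_lt_add_of_lt_of_le hθn (min_le_left _ _)
      _ = ρ := add_halves ρ

end Bounds

theorem stmt5 (θ : ℕ)
    (φ : (Fin θ → ℝ) → ℝ) (hφ : ContinuousOn φ (simplexOrd θ))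
    (Φ : (n : ℕ) → (Fin θ → ℕ) → (Fin θ → ℕ) → ℝ)
    (δ : ℕ → ℝ) (hδ : Tendsto δ atTop (nhds 0))
    (happrox : ∀ n : ℕ, 1 ≤ n → ∀ lam ∈ partitionsTh θ n, ∀ μ ∈ partitionsTh θ n,
      |Φ n lam μ - φ (fun i => (μ i : ℝ) / n)| ≤ δ n)
    (lamseq : (n : ℕ) → Fin θ → ℕ)
    (hlamseq : ∀ n : ℕ, 1 ≤ n → lamseq n ∈ partitionsTh θ n)
    (x : Fin θ → ℝ) (hx : x ∈ simplexOrd θ)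
    (hconv : Tendsto (fun n : ℕ => fun i => (lamseq n i : ℝ) / n) atTop (nhds x)) :
    ∃ M : ℝ, IsGreatest (φ '' domSet θ x) M ∧
      Tendsto (fun n : ℕ => (1 / (n : ℝ)) * Real.log
          (∑ μ ∈ (partitionsTh θ n).filter (fun μ => domN θ μ (lamseq n)),
            Real.exp ((n : ℝ) * Φ n (lamseq n) μ)))
        atTop (nhds M) := by
  obtain ⟨M, hM⟩ := exists_isGreatest_image_domSet hφ hx
  have hδ' : ∀ ε > 0, ∀ᶠ n in atTop, δ n ≤ ε := fun ε hε => hδ.eventually (eventually_le_nhds hε)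
  refine ⟨M, hM, tendsto_one_div_mul_log_sum_exp (d := θ)
    (fun n => (card_filter_le _ _).trans (card_partitionsTh_le θ n))
    (fun ε hε => ?_) fun ε hε => ?_⟩
  · filter_upwards [eventually_forall_dominating_le hφ hM hconv (half_pos hε), hδ' _ (half_pos hε),
      eventually_ge_atTop 1] with n hφn hδn hn μ hμ
    have := abs_le.1 (happrox n hn _ (hlamseq n hn) μ (mem_filter.1 hμ).1)
    linarith [hφn μ hμ]
  · obtain ⟨y, hy, rfl⟩ := hM.1
    obtain ⟨ρ, hρ, hφρ⟩ := Metric.continuousWithinAt_iff.1 (hφ y hy.1) _ (half_pos hε)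
    filter_upwards [eventually_exists_dominating_near hlamseq hconv hy hρ, hδ' _ (half_pos hε),
      eventually_ge_atTop 1] with n ⟨μ, hμ, hμy⟩ hδn hn
    have hμ' := (mem_filter.1 hμ).1
    have h₁ := abs_le.1 (happrox n hn _ (hlamseq n hn) μ hμ')
    have h₂ := abs_lt.1 (hφρ (natCast_div_mem_simplexOrd (by omega) hμ') hμy)
    exact ⟨μ, hμ, by linarith [h₁.1, h₂.1]⟩
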